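/- Let IP : {0,1}^n × {0,1}^n → {0,1} be the bitwise inner-product function, IP(x,y) = Σ_i x_i y_i (mod 2). Then s = GH(IP) satisfies s · log₂(s) ≥ n; in particular GH(IP) ∈ Ω(n / log n). -/

import Mathlib

/-- A partial matching on the vertex type `V`, encoded by a partner function:
`m i = some j` means that there is an edge between `i` and `j`;
the graph `{ {i,j} | m i = some j }` then has maximum degree at most `1`
and no self-loops. -/
def IsPartialMatching {V : Type*} (m : V → Option V) : Prop :=
  ∀ i j, m i = some j → i ≠ j ∧ m j = some i

/-- The position of the water in a garden-hose game with `s` pipes: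
`atAlice i` (resp. `atBob i`) means the water has just arrived at Alice's
(resp. Bob's) end of pipe `i`; `exitA` / `exitB` mean the water has exited
on Alice's / Bob's side, i.e. the maximal path starting at the tap has ended
in `A∘` / in `B`. -/
inductive GHState (s : ℕ) where
  | atAlice : Fin s → GHState s
  | atBob : Fin s → GHState s
  | exitA : GHState s
  | exitB : GHState s
  deriving DecidableEq

/-- Vertex `k` of `A∘ = {0, 1, ..., s}` viewed as a pipe: vertex `0` is the water
tap (no pipe), and vertex `i + 1` is Alice's end of pipe `i`. -/
def toPipe {s : ℕ} (k : Fin (s + 1)) : Option (Fin s) :=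
  if h : (k : ℕ) = 0 then none
  else some ⟨(k : ℕ) - 1, by have := k.isLt; omega⟩

/-- One step of the water flow, given Alice's connections `a` on `A∘ = {0,...,s}`
and Bob's connections `b` on `B = {1,...,s}` (indexed by pipes `Fin s`). -/
def ghStep {s : ℕ} (a : Fin (s + 1) → Option (Fin (s + 1)))
    (b : Fin s → Option (Fin s)) : GHState s → GHState s
  | GHState.atAlice i =>
    match a i.succ with
    | none => GHState.exitA
    | some k =>
      match toPipe k with
      | none => GHState.exitA
      | some p => GHState.atBob p
  | GHState.atBob i =>
    match b i with
    | none => GHState.exitB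
    | some j => GHState.atAlice j
  | GHState.exitA => GHState.exitA
  | GHState.exitB => GHState.exitB

/-- The start of the water flow: the tap (vertex `0` of `A∘`) is connected by
Alice to at most one pipe. -/
def ghStart {s : ℕ} (a : Fin (s + 1) → Option (Fin (s + 1))) : GHState s :=
  match a 0 with
  | none => GHState.exitA
  | some k =>
    match toPipe k with
    | none => GHState.exitA
    | some p => GHState.atBob p

/-- The endpoint of the maximal path `π(x,y)` starting at the tap: since the graph
has maximum degree `2` and the path is simple, it is reached after at most
`2s + 2` steps. -/
def ghResult {s : ℕ} (a : Fin (s + 1) → Option (Fin (s + 1)))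
    (b : Fin s → Option (Fin s)) : GHState s :=
  (ghStep a b)^[2 * s + 2] (ghStart a)

/-- A garden-hose game of size `s` on inputs `{0,1}^n × {0,1}^n`: for every input
`x` Alice chooses a partial matching `EA x` on `A∘ = {0,1,…,s}` and for every
input `y` Bob chooses a partial matching `EB y` on `B = {1,…,s}`. -/
structure GHGame (n s : ℕ) where
  EA : (Fin n → Bool) → Fin (s + 1) → Option (Fin (s + 1))
  EB : (Fin n → Bool) → Fin s → Option (Fin s)
  matchA : ∀ x, IsPartialMatching (EA x)
  matchB : ∀ y, IsPartialMatching (EB y)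

/-- Where the water exits on input `(x, y)`. -/
def GHGame.run {n s : ℕ} (G : GHGame n s) (x y : Fin n → Bool) : GHState s :=
  ghResult (G.EA x) (G.EB y)

/-- The game `G` computes `f` if for all inputs the maximal path from the tap ends
in `A∘` whenever `f x y = 0` (water exits on Alice's side) and in `B` whenever
`f x y = 1` (water exits on Bob's side). -/
def GHGame.Computes {n s : ℕ} (G : GHGame n s)
    (f : (Fin n → Bool) → (Fin n → Bool) → Bool) : Prop :=
  ∀ x y, G.run x y = if f x y then GHState.exitB else GHState.exitA

/-- The garden-hose complexity of `f`: the minimal number of pipes of a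
garden-hose game computing `f`. -/
noncomputable def GH {n : ℕ} (f : (Fin n → Bool) → (Fin n → Bool) → Bool) : ℕ :=
  sInf {s : ℕ | ∃ G : GHGame n s, G.Computes f}

/-- The bitwise inner-product function: `IP x y = Σ_i x_i y_i (mod 2)`. -/
def IPfun (n : ℕ) (x y : Fin n → Bool) : Bool :=
  decide ((Finset.univ.filter fun i => x i = true ∧ y i = true).card % 2 = 1)

/-!
If a game computes `IP`, then Bob's matching `E_B(y)` determines `y`, because
`IP(eᵢ, y) = yᵢ` and the water's exit depends on `y` only through `E_B(y)`. A partial matching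
on `s` points is determined by its partner map `Fin s → Fin s`, so `2 ^ n ≤ s ^ s`, i.e.
`n ≤ s log₂ s`. Since `sInf ∅ = 0`, this bounds `GH` only once some game computes `IP`; in
fact every `f` is computable: Alice sends the water down the pipe of `(true, x)`, and Bob
either leaves it open there or, when `f x y = false`, returns it through the pipe of
`(false, x)`, which Alice leaves open.
-/

open Function

theorem isPartialMatching_of_involutive {V : Type*} {σ : V → V} {P : V → Prop}
    [DecidablePred P] (hσ : Involutive σ) (hP : ∀ v, P (σ v) ↔ P v)
    (hfix : ∀ v, P v → σ v ≠ v) :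
    IsPartialMatching fun v => if P v then some (σ v) else none := by
  intro i j h
  dsimp only at h ⊢
  split_ifs at h with hi
  cases h
  exact ⟨(hfix i hi).symm, by rw [if_pos ((hP i).2 hi), hσ]⟩

def partner {V : Type*} (m : V → Option V) (v : V) : V :=
  (m v).getD v

theorem IsPartialMatching.eq_ite_partner {V : Type*} [DecidableEq V] {m : V → Option V}
    (hm : IsPartialMatching m) (v : V) :
    m v = if partner m v = v then none else some (partner m v) := by
  cases hv : m v with
  | none => simp [partner, hv]
  | some w => simp [partner, hv, (hm v w hv).1.symm]

theorem IsPartialMatching.eq_of_partner_eq {V : Type*} {m m' : V → Option V}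
    (hm : IsPartialMatching m) (hm' : IsPartialMatching m') (h : partner m = partner m') :
    m = m' := by
  classical
  funext v
  rw [hm.eq_ite_partner, hm'.eq_ite_partner, h]

theorem toPipe_succ {s : ℕ} (p : Fin s) : toPipe p.succ = some p := by
  simp [toPipe]

theorem iterate_ghStep_exitA {s : ℕ} (a : Fin (s + 1) → Option (Fin (s + 1)))
    (b : Fin s → Option (Fin s)) (k : ℕ) : (ghStep a b)^[k] GHState.exitA = GHState.exitA :=
  iterate_fixed rfl k

theorem iterate_ghStep_exitB {s : ℕ} (a : Fin (s + 1) → Option (Fin (s + 1)))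
    (b : Fin s → Option (Fin s)) (k : ℕ) : (ghStep a b)^[k] GHState.exitB = GHState.exitB :=
  iterate_fixed rfl k

namespace GHGame

variable {n : ℕ}

/-- Pipe `pipe (c, x)` is the forward (`c = true`) or return (`c = false`) pipe of `x`. -/
noncomputable def pipe : Bool × (Fin n → Bool) ≃ Fin (Fintype.card (Bool × (Fin n → Bool))) :=
  Fintype.equivFin _

noncomputable def twin (p : Fin (Fintype.card (Bool × (Fin n → Bool)))) :
    Fin (Fintype.card (Bool × (Fin n → Bool))) :=
  pipe (!(pipe.symm p).1, (pipe.symm p).2)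

theorem twin_involutive : Involutive (twin (n := n)) := by
  intro p
  simp [twin]

theorem twin_ne_self (p : Fin (Fintype.card (Bool × (Fin n → Bool)))) : twin p ≠ p := by
  intro h
  have := congrArg (fun q => (pipe.symm q).1) h
  simp [twin] at this

noncomputable def univ (f : (Fin n → Bool) → (Fin n → Bool) → Bool) :
    GHGame n (Fintype.card (Bool × (Fin n → Bool))) where
  EA x := fun v => if v = 0 ∨ v = (pipe (true, x)).succ
    then some (Equiv.swap 0 (pipe (true, x)).succ v) else none
  EB y := fun p => if f (pipe.symm p).2 y = false then some (twin p) else none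
  matchA x := isPartialMatching_of_involutive (Equiv.swap_apply_self _ _)
    (fun v => by simp only [Equiv.swap_apply_eq_iff, Equiv.swap_apply_left,
      Equiv.swap_apply_right, or_comm])
    (fun v hv => by rcases hv with rfl | rfl <;> simp [(Fin.succ_ne_zero _).symm, Fin.succ_ne_zero])
  matchB y := isPartialMatching_of_involutive twin_involutive
    (fun p => by simp [twin]) (fun p _ => twin_ne_self p)

theorem univ_computes (f : (Fin n → Bool) → (Fin n → Bool) → Bool) : (univ f).Computes f := by
  intro x y
  have hstart : ghStart ((univ f).EA x) = GHState.atBob (pipe (true, x)) := by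
    simp [ghStart, univ, toPipe_succ]
  rw [run, ghResult, iterate_add_apply, hstart]
  cases hf : f x y
  · simp [ghStep, univ, hf, twin_ne_self, iterate_ghStep_exitA]
  · simp [ghStep, univ, hf, iterate_ghStep_exitB]

theorem exists_computes_GH (f : (Fin n → Bool) → (Fin n → Bool) → Bool) :
    ∃ G : GHGame n (GH f), G.Computes f :=
  Nat.sInf_mem (s := {s | ∃ G : GHGame n s, G.Computes f}) ⟨_, univ f, univ_computes f⟩

theorem Computes.injective_EB {s : ℕ} {G : GHGame n s}
    {f : (Fin n → Bool) → (Fin n → Bool) → Bool} (hG : G.Computes f)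
    (hf : Injective (swap f)) : Injective G.EB := by
  intro y y' h
  apply hf
  funext x
  have hrun : G.run x y = G.run x y' := by rw [run, run, h]
  rw [hG, hG] at hrun
  cases hy : f x y <;> cases hy' : f x y' <;> simp_all [swap]

theorem Computes.two_pow_le_pow_self {s : ℕ} {G : GHGame n s}
    {f : (Fin n → Bool) → (Fin n → Bool) → Bool} (hG : G.Computes f)
    (hf : Injective (swap f)) : 2 ^ n ≤ s ^ s := by
  have hinj : Injective fun y => partner (G.EB y) := fun y y' h =>
    hG.injective_EB hf ((G.matchB y).eq_of_partner_eq (G.matchB y') h)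
  simpa using Fintype.card_le_of_injective _ hinj

end GHGame

theorem IPfun_indicator (n : ℕ) (i : Fin n) (y : Fin n → Bool) :
    IPfun n (fun j => decide (j = i)) y = y i := by
  simp only [IPfun, decide_eq_true_eq, Finset.filter_and, Finset.filter_eq', Finset.mem_univ,
    if_true]
  cases h : y i <;> simp [Finset.singleton_inter_of_mem, Finset.singleton_inter_of_notMem, h]

theorem IPfun_swap_injective (n : ℕ) : Injective (swap (IPfun n)) := by
  intro y y' h
  funext i
  simpa [swap, IPfun_indicator] using congrFun h fun j => decide (j = i)

theorem cast_le_mul_logb_of_two_pow_le {n s : ℕ} (h : 2 ^ n ≤ s ^ s) :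
    (n : ℝ) ≤ s * Real.logb 2 s := by
  have h' : (2 : ℝ) ^ n ≤ (s : ℝ) ^ s := by exact_mod_cast h
  calc (n : ℝ) = Real.logb 2 ((2 : ℝ) ^ n) := by
        rw [Real.logb_pow, Real.logb_self_eq_one one_lt_two, mul_one]
    _ ≤ Real.logb 2 ((s : ℝ) ^ s) := Real.logb_le_logb_of_le one_lt_two (by positivity) h'
    _ = s * Real.logb 2 s := Real.logb_pow _ _ _

theorem div_logb_le_of_le_mul_logb {m s : ℝ} (hm : 2 ≤ m) (hs : 0 ≤ s)
    (h : m ≤ s * Real.logb 2 s) : m / Real.logb 2 m ≤ s := by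
  have hlogm : 1 ≤ Real.logb 2 m := by
    simpa using Real.logb_le_logb_of_le one_lt_two two_pos hm
  rw [div_le_iff₀ (by linarith)]
  rcases le_or_gt s m with hsm | hms
  · have hs0 : 0 < s := hs.lt_of_ne (by rintro rfl; simp at h; linarith)
    calc m ≤ s * Real.logb 2 s := h
      _ ≤ s * Real.logb 2 m := by gcongr; norm_num
  · nlinarith

theorem cast_le_GH_IPfun_mul_logb (n : ℕ) :
    (n : ℝ) ≤ (GH (IPfun n) : ℝ) * Real.logb 2 (GH (IPfun n)) := by
  obtain ⟨G, hG⟩ := GHGame.exists_computes_GH (IPfun n)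
  exact cast_le_mul_logb_of_two_pow_le (hG.two_pow_le_pow_self (IPfun_swap_injective n))

/-- `s = GH(IP)` satisfies `s · log₂ s ≥ n`; in particular
`GH(IP) ∈ Ω(n / log n)`. -/
theorem gh_ip_lower_bound (n : ℕ) :
    (n : ℝ) ≤ (GH (IPfun n) : ℝ) * Real.logb 2 (GH (IPfun n)) ∧
    ∃ C : ℝ, 0 < C ∧ ∀ m : ℕ, 2 ≤ m →
      C * ((m : ℝ) / Real.logb 2 m) ≤ (GH (IPfun m) : ℝ) := by
  refine ⟨cast_le_GH_IPfun_mul_logb n, 1, one_pos, fun m hm => ?_⟩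
  rw [one_mul]
  exact div_logb_le_of_le_mul_logb (by exact_mod_cast hm) (Nat.cast_nonneg _)
    (cast_le_GH_IPfun_mul_logb m)
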